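/- If w ∈ RH∞, then for every exponent s > 0 the power wˢ is in RH∞. -/

import Mathlib

open MeasureTheory ENNReal NNReal Set

noncomputable section

/-- `ℝⁿ` modeled as functions `Fin n → ℝ`. -/
abbrev Rn (n : ℕ) := Fin n → ℝ

/-- An axis-parallel (half-open) cube in `ℝⁿ`. -/
def IsCube {n : ℕ} (Q : Set (Rn n)) : Prop :=
  ∃ (c : Rn n) (h : ℝ), 0 < h ∧ Q = {x | ∀ i, c i ≤ x i ∧ x i < c i + h}

/-- A (half-open) dyadic cube in `ℝⁿ`. -/
def IsDyadicCube {n : ℕ} (Q : Set (Rn n)) : Prop :=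
  ∃ (k : ℤ) (z : Fin n → ℤ),
    Q = {x | ∀ i, (z i : ℝ) * 2 ^ k ≤ x i ∧ x i < ((z i : ℝ) + 1) * 2 ^ k}

/-- The average `⟨w⟩_Q = (1/|Q|) ∫_Q w`. -/
def avg {n : ℕ} (w : Rn n → ℝ≥0∞) (Q : Set (Rn n)) : ℝ≥0∞ :=
  (∫⁻ x in Q, w x) / volume Q

/-- A weight: measurable, nonnegative (automatic in `ℝ≥0∞`) and locally integrable. -/
def IsWeight {n : ℕ} (w : Rn n → ℝ≥0∞) : Prop :=
  Measurable w ∧ ∀ Q : Set (Rn n), IsCube Q → ∫⁻ x in Q, w x ≠ ∞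

/-- Muckenhoupt `A₁` condition with constant `C`. -/
def IsA1 {n : ℕ} (w : Rn n → ℝ≥0∞) (C : ℝ≥0∞) : Prop :=
  ∀ Q : Set (Rn n), IsCube Q → avg w Q ≤ C * essInf w (volume.restrict Q)

/-- The reverse Hölder `RH∞` condition with constant `C`. -/
def IsRHinf {n : ℕ} (w : Rn n → ℝ≥0∞) (C : ℝ≥0∞) : Prop :=
  ∀ Q : Set (Rn n), IsCube Q → essSup w (volume.restrict Q) ≤ C * avg w Q

/-- Muckenhoupt `A_p` condition (`1 < p`) with constant `C`. -/
def IsAp {n : ℕ} (w : Rn n → ℝ≥0∞) (p : ℝ) (C : ℝ≥0∞) : Prop :=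
  ∀ Q : Set (Rn n), IsCube Q →
    avg w Q * (avg (fun x => (w x) ^ (-(1 / (p - 1)))) Q) ^ (p - 1) ≤ C

/-- `A∞` is the union of the `A_p` classes. -/
def IsAinf {n : ℕ} (w : Rn n → ℝ≥0∞) : Prop :=
  ∃ (p : ℝ) (C : ℝ≥0∞), 1 < p ∧ C ≠ ∞ ∧ IsAp w p C

/-- The Hardy–Littlewood maximal operator over cubes. -/
def Mc {n : ℕ} (f : Rn n → ℝ≥0∞) (x : Rn n) : ℝ≥0∞ :=
  ⨆ (Q : Set (Rn n)) (_ : IsCube Q ∧ x ∈ Q), avg f Q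

/-- The multi(sub)linear maximal function of Lerner–Nazarov–Ombrosi–Pérez–Trujillo-González. -/
def MM {n m : ℕ} (f : Fin m → Rn n → ℝ≥0∞) (x : Rn n) : ℝ≥0∞ :=
  ⨆ (Q : Set (Rn n)) (_ : IsCube Q ∧ x ∈ Q), ∏ i, avg (f i) Q

/-- The dyadic multi(sub)linear maximal function. -/
def MMd {n m : ℕ} (f : Fin m → Rn n → ℝ≥0∞) (x : Rn n) : ℝ≥0∞ :=
  ⨆ (Q : Set (Rn n)) (_ : IsDyadicCube Q ∧ x ∈ Q), ∏ i, avg (f i) Q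

/-- Weak `L^{p,∞}(μ)` quasinorm, `sup_{t>0} t · μ({g > t})^{1/p}`. -/
def wnorm {α : Type*} [MeasurableSpace α] (g : α → ℝ≥0∞) (p : ℝ) (μ : Measure α) : ℝ≥0∞ :=
  ⨆ t : ℝ≥0, (t : ℝ≥0∞) * (μ {x | (t : ℝ≥0∞) < g x}) ^ (1 / p)

/-- The multilinear `A_{1⃗}` condition with constant `C`. -/
def IsA1vec {n m : ℕ} (w : Fin m → Rn n → ℝ≥0∞) (C : ℝ≥0∞) : Prop :=
  ∀ Q : Set (Rn n), IsCube Q →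
    avg (fun x => (∏ i, w i x) ^ ((m : ℝ)⁻¹)) Q *
      ∏ i, (essInf (w i) (volume.restrict Q)) ^ (-(m : ℝ)⁻¹) ≤ C

lemma cube_vol {n : ℕ} {Q : Set (Rn n)} (hQ : IsCube Q) :
    volume Q ≠ 0 ∧ volume Q ≠ ∞ := by
  obtain ⟨c, h, hh, rfl⟩ := hQ
  have : {x : Rn n | ∀ i, c i ≤ x i ∧ x i < c i + h}
      = Set.pi Set.univ (fun i => Set.Ico (c i) (c i + h)) := by
    ext x; simp [Set.mem_pi]
  rw [this, volume_pi_pi]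
  simp only [Real.volume_Ico, add_sub_cancel_left]
  constructor
  · simp [Finset.prod_eq_zero_iff, ENNReal.ofReal_eq_zero, not_le, hh]
  · exact (ENNReal.prod_lt_top (fun i _ => ENNReal.ofReal_lt_top)).ne

-- antitone rpow for nonpositive exponents
lemma rpow_le_rpow_of_nonpos' {x y : ℝ≥0∞} {z : ℝ}
    (hxy : x ≤ y) (hz : z ≤ 0) : y ^ z ≤ x ^ z := by
  have h1 : y ^ z = (y ^ (-z))⁻¹ := by rw [← ENNReal.rpow_neg, neg_neg]
  have h2 : x ^ z = (x ^ (-z))⁻¹ := by rw [← ENNReal.rpow_neg, neg_neg]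
  rw [h1, h2]
  exact ENNReal.inv_le_inv.mpr (ENNReal.rpow_le_rpow hxy (neg_nonneg.2 hz))

/-- if `w ∈ RH∞` then `w^s ∈ RH∞` for every `s > 0`. -/
theorem RHinf_rpow {n : ℕ} (w : Rn n → ℝ≥0∞) (hw : IsWeight w)
    (C : ℝ≥0∞) (hC : C ≠ ∞) (hw' : IsRHinf w C) (s : ℝ) (hs : 0 < s) :
    ∃ C' : ℝ≥0∞, C' ≠ ∞ ∧ IsRHinf (fun x => w x ^ s) C' := by
  rcases le_or_gt s 1 with hs1 | hs1
  · -- case s ≤ 1, constant C + 1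
    refine ⟨C + 1, by simp [hC], ?_⟩
    intro Q hQ
    obtain ⟨hv0, hvt⟩ := cube_vol hQ
    set M := essSup w (volume.restrict Q) with hMdef
    have hMC : M ≤ C * avg w Q := hw' Q hQ
    have hIfin : ∫⁻ x in Q, w x ≠ ∞ := hw.2 Q hQ
    have hAfin : avg w Q ≠ ∞ := by
      rw [avg]
      intro h
      rcases ENNReal.div_eq_top.mp h with ⟨_, h2⟩ | ⟨h1, _⟩
      · exact hv0 h2
      · exact hIfin h1
    have hMfin : M ≠ ∞ := by
      intro h
      rw [h] at hMC
      exact (ENNReal.mul_ne_top hC hAfin) (top_le_iff.mp hMC)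
    have h1 : essSup (fun x => w x ^ s) (volume.restrict Q) ≤ M ^ s := by
      refine essSup_le_of_ae_le _ ?_
      filter_upwards [ENNReal.ae_le_essSup (μ := volume.restrict Q) w] with x hx
      exact ENNReal.rpow_le_rpow hx hs.le
    by_cases hM0 : M = 0
    · refine h1.trans ?_
      rw [hM0, ENNReal.zero_rpow_of_pos hs]
      exact zero_le
    · have hC0 : C ≠ 0 := by
        intro h
        rw [h, zero_mul, le_zero_iff] at hMC
        exact hM0 hMC
      -- pointwise a.e. : M^(s-1) * w x ≤ w x ^ s
      have key : ∀ᵐ x ∂(volume.restrict Q), M ^ (s - 1) * w x ≤ w x ^ s := by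
        filter_upwards [ENNReal.ae_le_essSup (μ := volume.restrict Q) w] with x hx
        by_cases hx0 : w x = 0
        · simp [hx0]
        · have hxfin : w x ≠ ∞ := (hx.trans_lt hMfin.lt_top).ne
          have hle : M ^ (s - 1) ≤ w x ^ (s - 1) :=
            rpow_le_rpow_of_nonpos' hx (by linarith)
          calc M ^ (s - 1) * w x ≤ w x ^ (s - 1) * w x := mul_le_mul_left hle _
            _ = w x ^ (s - 1) * w x ^ (1 : ℝ) := by rw [ENNReal.rpow_one]
            _ = w x ^ (s - 1 + 1) := (ENNReal.rpow_add _ _ hx0 hxfin).symm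
            _ = w x ^ s := by rw [sub_add_cancel]
      have h2 : M ^ (s - 1) * ∫⁻ x in Q, w x ≤ ∫⁻ x in Q, w x ^ s := by
        rw [← lintegral_const_mul _ hw.1]
        exact lintegral_mono_ae key
      have h3 : M ^ (s - 1) * avg w Q ≤ avg (fun x => w x ^ s) Q := by
        rw [avg, avg, ← mul_div_assoc]
        exact ENNReal.div_le_div_right h2 _
      have h4 : M ^ s ≤ C * avg (fun x => w x ^ s) Q := by
        have : M ^ s = M ^ (s - 1) * M := by
          nth_rewrite 1 [show s = s - 1 + 1 by ring]
          rw [ENNReal.rpow_add _ _ hM0 hMfin, ENNReal.rpow_one]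
        rw [this]
        calc M ^ (s - 1) * M ≤ M ^ (s - 1) * (C * avg w Q) := mul_le_mul_right hMC _
          _ = C * (M ^ (s - 1) * avg w Q) := by ring
          _ ≤ C * avg (fun x => w x ^ s) Q := mul_le_mul_right h3 _
      refine h1.trans (h4.trans ?_)
      exact mul_le_mul_left le_self_add _
  · -- case 1 < s, constant C ^ s
    refine ⟨C ^ s, ENNReal.rpow_ne_top_of_nonneg hs.le hC, ?_⟩
    intro Q hQ
    obtain ⟨hv0, hvt⟩ := cube_vol hQ
    have hMC : essSup w (volume.restrict Q) ≤ C * avg w Q := hw' Q hQ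
    have h1 : essSup (fun x => w x ^ s) (volume.restrict Q) ≤
        (essSup w (volume.restrict Q)) ^ s := by
      refine essSup_le_of_ae_le _ ?_
      filter_upwards [ENNReal.ae_le_essSup (μ := volume.restrict Q) w] with x hx
      exact ENNReal.rpow_le_rpow hx hs.le
    -- Jensen/Hölder : (avg w)^s ≤ avg (w^s)
    have hJ : (avg w Q) ^ s ≤ avg (fun x => w x ^ s) Q := by
      by_cases hIs : (∫⁻ x in Q, w x ^ s) = ∞
      · have : avg (fun x => w x ^ s) Q = ∞ := by
          rw [avg, hIs, ENNReal.div_eq_top]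
          exact Or.inr ⟨rfl, hvt⟩
        rw [this]; exact le_top
      · have hpq : s.HolderConjugate (Real.conjExponent s) :=
          Real.HolderConjugate.conjExponent hs1
        set q := Real.conjExponent s with hq
        have holder := ENNReal.lintegral_mul_le_Lp_mul_Lq (volume.restrict Q) hpq
          hw.1.aemeasurable (aemeasurable_const (b := (1 : ℝ≥0∞)))
        simp only [Pi.mul_apply, mul_one, ENNReal.one_rpow, lintegral_const,
          Measure.restrict_apply MeasurableSet.univ, Set.univ_inter, one_mul] at holder
        -- holder : ∫⁻ w ≤ (∫⁻ w^s)^(1/s) * (vol Q)^(1/q)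
        have hAle : avg w Q ≤ (avg (fun x => w x ^ s) Q) ^ (1 / s) := by
          have hstep : avg w Q ≤ (∫⁻ x in Q, w x ^ s) ^ (1 / s) *
              (volume Q) ^ (1 / q) / volume Q :=
            ENNReal.div_le_div_right holder _
          refine hstep.trans_eq ?_
          have hinv : 1 / q - 1 = -(1 / s) := by
            have h := hpq.inv_add_inv_eq_one
            rw [one_div, one_div]
            linarith
          have hv2 : volume Q ^ (1 / q) / volume Q = (volume Q ^ (1 / s))⁻¹ := by
            have h := ENNReal.rpow_sub (1 / q) 1 hv0 hvt
            rw [ENNReal.rpow_one] at h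
            rw [← h, hinv, ENNReal.rpow_neg]
          rw [mul_div_assoc, hv2, ← div_eq_mul_inv]
          simp only [avg]
          rw [ENNReal.div_rpow_of_nonneg _ _ (by positivity : (0:ℝ) ≤ 1 / s)]
        calc (avg w Q) ^ s ≤ ((avg (fun x => w x ^ s) Q) ^ (1 / s)) ^ s :=
              ENNReal.rpow_le_rpow hAle hs.le
          _ = avg (fun x => w x ^ s) Q := by
              rw [← ENNReal.rpow_mul, one_div, inv_mul_cancel₀ hs.ne', ENNReal.rpow_one]
    refine h1.trans ?_
    calc (essSup w (volume.restrict Q)) ^ s ≤ (C * avg w Q) ^ s :=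
          ENNReal.rpow_le_rpow hMC hs.le
      _ = C ^ s * (avg w Q) ^ s := ENNReal.mul_rpow_of_nonneg _ _ hs.le
      _ ≤ C ^ s * avg (fun x => w x ^ s) Q := mul_le_mul_right hJ _
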